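/- arXiv:1310.4871 — 2 statements merged into one kernel-verified Lean document; each statement's English description precedes it below -/
import Mathlib

section
/- Let Ω be a connected open subset of ℂ, let ρ : Ω̃ → (0,∞) be a C² function defining a flat metric (log ρ is harmonic on Ω̃), and let f : Ω → Ω̃ be a smooth map harmonic with respect to ρ with f_z(z) ≠ 0 for every z ∈ Ω. If |μ_f| attains a local maximum at some point of Ω, then |μ_f| is constant on Ω; if |μ_f| attains a local minimum at a point z₀ ∈ Ω with μ_f(z₀) ≠ 0, then |μ_f| is constant on Ω. In particular, |μ_f| cannot attain a strict local maximum, and cannot attain a strict local minimum with nonzero value. -/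
noncomputable section

open Complex Set Topology

/-- Wirtinger derivative `∂f/∂z` of a map `f : ℂ → ℂ`, viewed as a map of `ℝ² = ℂ`. -/
def wdz (f : ℂ → ℂ) (z : ℂ) : ℂ :=
  (1 / 2 : ℂ) * (fderiv ℝ f z 1 - Complex.I * fderiv ℝ f z Complex.I)

/-- Wirtinger derivative `∂f/∂z̄` of a map `f : ℂ → ℂ`. -/
def wdzbar (f : ℂ → ℂ) (z : ℂ) : ℂ :=
  (1 / 2 : ℂ) * (fderiv ℝ f z 1 + Complex.I * fderiv ℝ f z Complex.I)

/-- The Wirtinger derivative `(log ρ)_w` of the logarithm of a positive function `ρ`. -/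
def wlog (ρ : ℂ → ℝ) (w : ℂ) : ℂ :=
  wdz (fun u => (Real.log (ρ u) : ℂ)) w

/-- A real valued function is harmonic on a set if its Laplacian `u_xx + u_yy` vanishes there. -/
def IsHarmonicOn (u : ℂ → ℝ) (s : Set ℂ) : Prop :=
  ∀ z ∈ s,
    fderiv ℝ (fun w => fderiv ℝ u w 1) z 1 +
      fderiv ℝ (fun w => fderiv ℝ u w Complex.I) z Complex.I = 0

/-- `f` is harmonic on `Ω` with respect to the conformal metric `ρ(w)|dw|`:
the tension equation `f_zz̄ + (log ρ)_w(f) f_z f_z̄ = 0` holds on `Ω`. -/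
def IsRhoHarmonicOn (f : ℂ → ℂ) (ρ : ℂ → ℝ) (Ω : Set ℂ) : Prop :=
  ∀ z ∈ Ω, wdz (wdzbar f) z + wlog ρ (f z) * wdz f z * wdzbar f z = 0

theorem wirtinger_apply (g : ℂ → ℂ) (w : ℂ) (u : ℂ) :
    fderiv ℝ g w u = wdz g w * u + wdzbar g w * (starRingEnd ℂ) u := by
  obtain ⟨x, y, rfl⟩ : ∃ x y : ℝ, u = (x : ℂ) + (y : ℂ) * Complex.I :=
    ⟨u.re, u.im, (Complex.re_add_im u).symm⟩
  have expand : (x:ℂ) + (y:ℂ)*Complex.I = (x : ℝ) • (1:ℂ) + (y : ℝ) • Complex.I := by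
    simp [Complex.real_smul]
  rw [expand, map_add, map_smul, map_smul, wdz, wdzbar]
  simp only [Complex.real_smul, map_add, map_mul, Complex.conj_ofReal, Complex.conj_I,
    smul_eq_mul, mul_one]
  ring_nf
  linear_combination (fderiv ℝ g w Complex.I) * y * Complex.I_sq

theorem wdz_congr {a b : ℂ → ℂ} {z : ℂ} (h : a =ᶠ[nhds z] b) : wdz a z = wdz b z := by
  rw [wdz, wdz, h.fderiv_eq]

-- holomorphic functions
theorem wdz_of_hasDerivAt {g : ℂ → ℂ} {d z : ℂ} (h : HasDerivAt g d z) : wdz g z = d := by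
  have h' := (h.hasFDerivAt.restrictScalars ℝ).fderiv
  rw [wdz, h']
  simp [Complex.I_sq]
  ring_nf
  simp [Complex.I_sq]
  ring

theorem wdzbar_of_hasDerivAt {g : ℂ → ℂ} {d z : ℂ} (h : HasDerivAt g d z) : wdzbar g z = 0 := by
  have h' := (h.hasFDerivAt.restrictScalars ℝ).fderiv
  rw [wdzbar, h']
  simp [smul_eq_mul]
  ring_nf
  simp [Complex.I_sq]

theorem hasDerivAt_of_wdzbar_eq_zero {g : ℂ → ℂ} {z : ℂ} (hd : DifferentiableAt ℝ g z)
    (h : wdzbar g z = 0) : HasDerivAt g (wdz g z) z := by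
  have key : ((1 : ℂ →L[ℂ] ℂ).smulRight (wdz g z)).restrictScalars ℝ = fderiv ℝ g z := by
    apply ContinuousLinearMap.ext
    intro u
    have hres : (ContinuousLinearMap.restrictScalars ℝ
        ((1 : ℂ →L[ℂ] ℂ).smulRight (wdz g z))) u = u * wdz g z := by
      simp
    rw [hres, wirtinger_apply g z u, h]
    simp [smul_eq_mul]
    ring
  have := (hasFDerivAt_of_restrictScalars ℝ hd.hasFDerivAt key).hasDerivAt
  simpa using this

theorem fderiv_conj_comp {a : ℂ → ℂ} {z : ℂ} (ha : DifferentiableAt ℝ a z) (u : ℂ) :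
    fderiv ℝ (fun w => (starRingEnd ℂ) (a w)) z u = (starRingEnd ℂ) (fderiv ℝ a z u) := by
  have h := (Complex.conjCLE.hasFDerivAt.comp z ha.hasFDerivAt).fderiv
  rw [show (fun w => (starRingEnd ℂ) (a w)) = (⇑Complex.conjCLE ∘ a) from rfl, h]
  rfl

theorem wdzbar_conj {a : ℂ → ℂ} {z : ℂ} (ha : DifferentiableAt ℝ a z) :
    wdzbar (fun w => (starRingEnd ℂ) (a w)) z = (starRingEnd ℂ) (wdz a z) := by
  rw [wdzbar, wdz, fderiv_conj_comp ha, fderiv_conj_comp ha]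
  simp only [map_mul, map_add, map_sub, Complex.conj_I, map_one, map_ofNat, map_div₀]
  ring

theorem wdz_mul {a b : ℂ → ℂ} {z : ℂ} (ha : DifferentiableAt ℝ a z)
    (hb : DifferentiableAt ℝ b z) :
    wdz (fun w => a w * b w) z = wdz a z * b z + a z * wdz b z := by
  simp only [wdz, fderiv_fun_mul ha hb]
  simp only [ContinuousLinearMap.add_apply, ContinuousLinearMap.smul_apply, smul_eq_mul]
  ring

theorem wdzbar_mul {a b : ℂ → ℂ} {z : ℂ} (ha : DifferentiableAt ℝ a z)
    (hb : DifferentiableAt ℝ b z) :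
    wdzbar (fun w => a w * b w) z = wdzbar a z * b z + a z * wdzbar b z := by
  simp only [wdzbar, fderiv_fun_mul ha hb]
  simp only [ContinuousLinearMap.add_apply, ContinuousLinearMap.smul_apply, smul_eq_mul]
  ring

theorem wdz_comp {g a : ℂ → ℂ} {z : ℂ} (hg : DifferentiableAt ℝ g (a z))
    (ha : DifferentiableAt ℝ a z) :
    wdz (fun w => g (a w)) z
      = wdz g (a z) * wdz a z + wdzbar g (a z) * (starRingEnd ℂ) (wdzbar a z) := by
  have hc : fderiv ℝ (fun w => g (a w)) z = (fderiv ℝ g (a z)).comp (fderiv ℝ a z) :=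
    fderiv_comp z hg ha
  rw [wdz, hc]
  simp only [ContinuousLinearMap.comp_apply]
  rw [wirtinger_apply g (a z) (fderiv ℝ a z 1), wirtinger_apply g (a z) (fderiv ℝ a z Complex.I),
    wdz, wdzbar, wdz, wdzbar]
  simp only [map_mul, map_add, map_sub, Complex.conj_I, map_one, map_ofNat, map_div₀]
  ring

theorem wdzbar_comp {g a : ℂ → ℂ} {z : ℂ} (hg : DifferentiableAt ℝ g (a z))
    (ha : DifferentiableAt ℝ a z) :
    wdzbar (fun w => g (a w)) z
      = wdz g (a z) * wdzbar a z + wdzbar g (a z) * (starRingEnd ℂ) (wdz a z) := by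
  have hc : fderiv ℝ (fun w => g (a w)) z = (fderiv ℝ g (a z)).comp (fderiv ℝ a z) :=
    fderiv_comp z hg ha
  rw [wdzbar, hc]
  simp only [ContinuousLinearMap.comp_apply]
  rw [wirtinger_apply g (a z) (fderiv ℝ a z 1), wirtinger_apply g (a z) (fderiv ℝ a z Complex.I),
    wdz, wdzbar, wdz, wdzbar]
  simp only [map_mul, map_add, map_sub, Complex.conj_I, map_one, map_ofNat, map_div₀]
  ring

theorem fderiv_ofReal_comp {v : ℂ → ℝ} {z : ℂ} (hv : DifferentiableAt ℝ v z) (u : ℂ) :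
    fderiv ℝ (fun w => (v w : ℂ)) z u = ((fderiv ℝ v z u : ℝ) : ℂ) := by
  have h := (Complex.ofRealCLM.hasFDerivAt.comp z hv.hasFDerivAt).fderiv
  rw [show (fun w => (v w : ℂ)) = (⇑Complex.ofRealCLM ∘ v) from rfl, h]
  rfl

theorem wdzbar_ofReal {v : ℂ → ℝ} {z : ℂ} (hv : DifferentiableAt ℝ v z) :
    wdzbar (fun w => (v w : ℂ)) z = (starRingEnd ℂ) (wdz (fun w => (v w : ℂ)) z) := by
  rw [wdzbar, wdz, fderiv_ofReal_comp hv, fderiv_ofReal_comp hv]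
  simp only [map_mul, map_add, map_sub, Complex.conj_I, map_one, map_ofNat, map_div₀,
    Complex.conj_ofReal]
  ring

theorem contDiffAt_wdz {g : ℂ → ℂ} {z : ℂ} {m n : WithTop ℕ∞} (h : ContDiffAt ℝ n g z)
    (hmn : m + 1 ≤ n) : ContDiffAt ℝ m (wdz g) z := by
  have h1 : ContDiffAt ℝ m (fderiv ℝ g) z := h.fderiv_right hmn
  have h2 : ContDiffAt ℝ m (fun w => fderiv ℝ g w 1) z := h1.clm_apply contDiffAt_const
  have h3 : ContDiffAt ℝ m (fun w => fderiv ℝ g w Complex.I) z := h1.clm_apply contDiffAt_const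
  exact (contDiffAt_const (c := (1/2 : ℂ))).mul (h2.sub (contDiffAt_const.mul h3))

theorem contDiffAt_wdzbar {g : ℂ → ℂ} {z : ℂ} {m n : WithTop ℕ∞} (h : ContDiffAt ℝ n g z)
    (hmn : m + 1 ≤ n) : ContDiffAt ℝ m (wdzbar g) z := by
  have h1 : ContDiffAt ℝ m (fderiv ℝ g) z := h.fderiv_right hmn
  have h2 : ContDiffAt ℝ m (fun w => fderiv ℝ g w 1) z := h1.clm_apply contDiffAt_const
  have h3 : ContDiffAt ℝ m (fun w => fderiv ℝ g w Complex.I) z := h1.clm_apply contDiffAt_const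
  exact (contDiffAt_const (c := (1/2 : ℂ))).mul (h2.add (contDiffAt_const.mul h3))

theorem fderiv_wdz_apply {g : ℂ → ℂ} {z : ℂ} (h : ContDiffAt ℝ 2 g z) (u : ℂ) :
    fderiv ℝ (wdz g) z u = (1/2 : ℂ) * (fderiv ℝ (fderiv ℝ g) z u 1
      - Complex.I * fderiv ℝ (fderiv ℝ g) z u Complex.I) := by
  have hd : DifferentiableAt ℝ (fderiv ℝ g) z :=
    (h.fderiv_right (m := 1) (by norm_num)).differentiableAt one_ne_zero
  have h1 : ∀ v : ℂ, DifferentiableAt ℝ (fun w => fderiv ℝ g w v) z := fun v =>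
    hd.clm_apply (differentiableAt_const v)
  have e1 : ∀ v : ℂ, fderiv ℝ (fun w => fderiv ℝ g w v) z u = fderiv ℝ (fderiv ℝ g) z u v := by
    intro v
    rw [fderiv_clm_apply hd (differentiableAt_const v)]
    simp
  have : wdz g = fun w => (1/2 : ℂ) * (fderiv ℝ g w 1 - Complex.I * fderiv ℝ g w Complex.I) := rfl
  rw [this, fderiv_const_mul ((h1 1).fun_sub ((differentiableAt_const Complex.I).fun_mul (h1 Complex.I))),
    fderiv_fun_sub (h1 1) ((differentiableAt_const Complex.I).fun_mul (h1 Complex.I)),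
    fderiv_const_mul (h1 Complex.I)]
  simp only [ContinuousLinearMap.smul_apply, ContinuousLinearMap.sub_apply, smul_eq_mul]
  rw [e1 1, e1 Complex.I]

theorem fderiv_wdzbar_apply {g : ℂ → ℂ} {z : ℂ} (h : ContDiffAt ℝ 2 g z) (u : ℂ) :
    fderiv ℝ (wdzbar g) z u = (1/2 : ℂ) * (fderiv ℝ (fderiv ℝ g) z u 1
      + Complex.I * fderiv ℝ (fderiv ℝ g) z u Complex.I) := by
  have hd : DifferentiableAt ℝ (fderiv ℝ g) z :=
    (h.fderiv_right (m := 1) (by norm_num)).differentiableAt one_ne_zero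
  have h1 : ∀ v : ℂ, DifferentiableAt ℝ (fun w => fderiv ℝ g w v) z := fun v =>
    hd.clm_apply (differentiableAt_const v)
  have e1 : ∀ v : ℂ, fderiv ℝ (fun w => fderiv ℝ g w v) z u = fderiv ℝ (fderiv ℝ g) z u v := by
    intro v
    rw [fderiv_clm_apply hd (differentiableAt_const v)]
    simp
  have : wdzbar g = fun w => (1/2 : ℂ) * (fderiv ℝ g w 1 + Complex.I * fderiv ℝ g w Complex.I) :=
    rfl
  rw [this, fderiv_const_mul ((h1 1).fun_add ((differentiableAt_const Complex.I).fun_mul (h1 Complex.I))),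
    fderiv_fun_add (h1 1) ((differentiableAt_const Complex.I).fun_mul (h1 Complex.I)),
    fderiv_const_mul (h1 Complex.I)]
  simp only [ContinuousLinearMap.smul_apply, ContinuousLinearMap.add_apply, smul_eq_mul]
  rw [e1 1, e1 Complex.I]

theorem wdzbar_wdz_eq {g : ℂ → ℂ} {z : ℂ} (h : ContDiffAt ℝ 2 g z) :
    wdzbar (wdz g) z = (1/4 : ℂ) * (fderiv ℝ (fderiv ℝ g) z 1 1
      + fderiv ℝ (fderiv ℝ g) z Complex.I Complex.I) := by
  have hsym := h.isSymmSndFDerivAt (by norm_num)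
  rw [wdzbar, fderiv_wdz_apply h, fderiv_wdz_apply h, hsym.eq 1 Complex.I]
  ring_nf
  simp [Complex.I_sq]
  ring

theorem wdz_wdzbar_eq {g : ℂ → ℂ} {z : ℂ} (h : ContDiffAt ℝ 2 g z) :
    wdz (wdzbar g) z = (1/4 : ℂ) * (fderiv ℝ (fderiv ℝ g) z 1 1
      + fderiv ℝ (fderiv ℝ g) z Complex.I Complex.I) := by
  have hsym := h.isSymmSndFDerivAt (by norm_num)
  rw [wdz, fderiv_wdzbar_apply h, fderiv_wdzbar_apply h, hsym.eq 1 Complex.I]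
  ring_nf
  simp [Complex.I_sq]
  ring

theorem wdz_wdzbar_comm {g : ℂ → ℂ} {z : ℂ} (h : ContDiffAt ℝ 2 g z) :
    wdz (wdzbar g) z = wdzbar (wdz g) z := by
  rw [wdz_wdzbar_eq h, wdzbar_wdz_eq h]

theorem eventually_differentiableAt_of_contDiffAt {E F : Type*} [NormedAddCommGroup E]
    [NormedSpace ℝ E] [NormedAddCommGroup F] [NormedSpace ℝ F]
    {u : E → F} {z : E} {n : ℕ} (h : ContDiffAt ℝ (n + 1) u z) :
    ∀ᶠ w in nhds z, DifferentiableAt ℝ u w := by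
  obtain ⟨t, ht, h't⟩ : ∃ t ∈ nhds z, ContDiffOn ℝ 1 u t :=
    h.contDiffOn (m := 1) (by exact_mod_cast le_add_self) (by simp)
  rcases mem_nhds_iff.1 ht with ⟨v, vt, v_open, zv⟩
  filter_upwards [v_open.mem_nhds zv] with y hy
  exact ((h't.mono vt).contDiffAt (v_open.mem_nhds hy)).differentiableAt one_ne_zero

theorem harmonic_wdzbar_wdz {u : ℂ → ℝ} {z : ℂ} (h : ContDiffAt ℝ 2 u z)
    (hh : fderiv ℝ (fun w => fderiv ℝ u w 1) z 1
      + fderiv ℝ (fun w => fderiv ℝ u w Complex.I) z Complex.I = 0) :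
    wdzbar (wdz (fun w => (u w : ℂ))) z = 0 := by
  set U : ℂ → ℂ := fun w => (u w : ℂ) with hU
  have hUc : ContDiffAt ℝ 2 U z := by
    exact (Complex.ofRealCLM.contDiff.contDiffAt).comp z h
  have hev : ∀ᶠ w in nhds z, DifferentiableAt ℝ u w :=
    eventually_differentiableAt_of_contDiffAt (n := 1) h
  have hdU : DifferentiableAt ℝ (fderiv ℝ U) z :=
    (hUc.fderiv_right (m := 1) (by norm_num)).differentiableAt one_ne_zero
  have hdu1 : ∀ v : ℂ, DifferentiableAt ℝ (fun w => fderiv ℝ u w v) z := fun v =>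
    ((h.fderiv_right (m := 1) (by norm_num)).differentiableAt one_ne_zero).clm_apply
      (differentiableAt_const v)
  have key : ∀ x v : ℂ, fderiv ℝ (fderiv ℝ U) z x v
      = ((fderiv ℝ (fun w => fderiv ℝ u w v) z x : ℝ) : ℂ) := by
    intro x v
    have e1 : fderiv ℝ (fun w => fderiv ℝ U w v) z x = fderiv ℝ (fderiv ℝ U) z x v := by
      rw [fderiv_clm_apply hdU (differentiableAt_const v)]
      simp
    rw [← e1]
    have heq : (fun w => fderiv ℝ U w v) =ᶠ[nhds z] fun w => ((fderiv ℝ u w v : ℝ) : ℂ) :=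
      hev.mono fun w hw => fderiv_ofReal_comp hw v
    rw [heq.fderiv_eq, fderiv_ofReal_comp (hdu1 v) x]
  rw [wdzbar_wdz_eq hUc, key, key, ← Complex.ofReal_add, hh]
  simp

theorem exists_primitive {V : ℂ → ℂ} {c : ℂ} {R : NNReal} {r : ℝ} (hR : 0 < R) (hr : 0 < r)
    (hrR : r < (R : ℝ)) (hV : DifferentiableOn ℂ V (Metric.ball c R)) :
    ∃ P : ℂ → ℂ, ∀ z ∈ Metric.ball c r, HasDerivAt P (V z) z := by
  obtain ⟨R', hR'0, hrR', hR'R⟩ : ∃ R' : NNReal, 0 < R' ∧ r < (R' : ℝ) ∧ (R' : ℝ) < R := by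
    refine ⟨NNReal.mk ((r + R) / 2) (by positivity), ?_, ?_, ?_⟩
    · rw [← NNReal.coe_lt_coe]
      simp only [NNReal.coe_mk, NNReal.coe_zero]
      linarith
    · simp only [NNReal.coe_mk]
      linarith
    · simp only [NNReal.coe_mk]
      linarith
  have hV' : DifferentiableOn ℂ V (Metric.closedBall c R') :=
    hV.mono ((Metric.closedBall_subset_ball hR'R))
  have hs := hV'.hasFPowerSeriesOnBall hR'0
  set p := cauchyPowerSeries V c R' with hp
  set a : ℕ → ℂ := fun n => p.coeff n with ha
  have hrad : ((Real.toNNReal r : NNReal) : ENNReal) < p.radius := by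
    refine lt_of_lt_of_le ?_ hs.r_le
    refine ENNReal.coe_lt_coe.mpr ?_
    rw [← NNReal.coe_lt_coe]
    simpa [Real.coe_toNNReal r hr.le] using hrR'
  have hsum : Summable (fun n => ‖p n‖ * r ^ n) := by
    have h := p.summable_norm_mul_pow hrad
    simpa [Real.coe_toNNReal r hr.le] using h
  set g : ℕ → ℂ → ℂ := fun n z => a n / (n + 1) * (z - c) ^ (n + 1) with hg_def
  set g' : ℕ → ℂ → ℂ := fun n z => a n * (z - c) ^ n with hg'_def
  have hg : ∀ (n : ℕ) (y : ℂ), HasDerivAt (g n) (g' n y) y := by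
    intro n y
    have h1 : HasDerivAt (fun z : ℂ => (z - c) ^ (n + 1)) (((n : ℂ) + 1) * (y - c) ^ n) y := by
      have := ((hasDerivAt_id y).sub_const c).fun_pow (n + 1)
      push_cast at this ⊢
      simpa using this
    have h2 := h1.const_mul (a n / ((n : ℂ) + 1))
    have hne : ((n : ℂ) + 1) ≠ 0 := Nat.cast_add_one_ne_zero n
    have h3 : a n / ((n : ℂ) + 1) * (((n : ℂ) + 1) * (y - c) ^ n) = g' n y := by
      rw [hg'_def]
      field_simp
    rw [h3] at h2
    exact h2
  have hg' : ∀ (n : ℕ) (y : ℂ), y ∈ Metric.ball c r → ‖g' n y‖ ≤ ‖p n‖ * r ^ n := by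
    intro n y hy
    have hbound : ‖a n‖ ≤ ‖p n‖ := by
      have h1 : a n = p n (fun _ => (1 : ℂ)) := rfl
      rw [h1]
      calc ‖p n fun _ => (1 : ℂ)‖ ≤ ‖p n‖ * ∏ _i : Fin n, ‖(1 : ℂ)‖ := (p n).le_opNorm _
        _ = ‖p n‖ := by simp
    have hyc : ‖y - c‖ ≤ r := by
      rw [Metric.mem_ball, dist_eq_norm] at hy
      exact hy.le
    calc ‖g' n y‖ = ‖a n‖ * ‖y - c‖ ^ n := by
          simp [hg'_def, norm_mul, norm_pow]
      _ ≤ ‖p n‖ * r ^ n :=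
          mul_le_mul hbound (pow_le_pow_left₀ (norm_nonneg _) hyc n) (by positivity)
            (norm_nonneg _)
  have hg0 : Summable fun n => g n c := by
    have hzz : (fun n => g n c) = fun _ => (0 : ℂ) := funext fun n => by simp [hg_def]
    rw [hzz]
    exact summable_zero
  refine ⟨fun z => ∑' n, g n z, fun z hz => ?_⟩
  have hd := hasDerivAt_tsum_of_isPreconnected hsum Metric.isOpen_ball
    (convex_ball c r).isPreconnected (fun n y _ => hg n y) hg' (Metric.mem_ball_self hr) hg0 hz
  refine hd.congr_deriv (Eq.symm ?_)
  have hy : z - c ∈ Metric.eball (0 : ℂ) (R' : ENNReal) := by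
    rw [Metric.emetric_ball_nnreal, Metric.mem_ball, dist_eq_norm, sub_zero]
    rw [Metric.mem_ball, dist_eq_norm] at hz
    exact lt_trans hz hrR'
  have hsumV := hs.hasSum hy
  have h1 : V z = ∑' n, p n (fun _ => z - c) := by
    have h2 := hsumV.tsum_eq
    rw [show c + (z - c) = z from by ring] at h2
    exact h2.symm
  rw [h1]
  congr 1
  funext n
  rw [FormalMultilinearSeries.apply_eq_pow_smul_coeff, smul_eq_mul]
  rw [hg'_def]
  ring

theorem wdz_add {a b : ℂ → ℂ} {z : ℂ} (ha : DifferentiableAt ℝ a z)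
    (hb : DifferentiableAt ℝ b z) :
    wdz (fun w => a w + b w) z = wdz a z + wdz b z := by
  simp only [wdz, fderiv_fun_add ha hb, ContinuousLinearMap.add_apply]
  ring

theorem wdzbar_add {a b : ℂ → ℂ} {z : ℂ} (ha : DifferentiableAt ℝ a z)
    (hb : DifferentiableAt ℝ b z) :
    wdzbar (fun w => a w + b w) z = wdzbar a z + wdzbar b z := by
  simp only [wdzbar, fderiv_fun_add ha hb, ContinuousLinearMap.add_apply]
  ring

theorem wdz_neg {a : ℂ → ℂ} {z : ℂ} :
    wdz (fun w => -(a w)) z = -(wdz a z) := by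
  simp only [wdz, fderiv_fun_neg, ContinuousLinearMap.neg_apply]
  ring

theorem hasDerivAt_complex_inv {w : ℂ} (hw : w ≠ 0) :
    HasDerivAt (fun y : ℂ => y⁻¹) (-(w ^ 2)⁻¹) w := hasDerivAt_inv hw

theorem diff_inv_comp {a : ℂ → ℂ} {z : ℂ} (ha : DifferentiableAt ℝ a z) (h0 : a z ≠ 0) :
    DifferentiableAt ℝ (fun w => (a w)⁻¹) z :=
  (((hasDerivAt_complex_inv h0).differentiableAt).restrictScalars ℝ).comp z ha

theorem wdzbar_inv {a : ℂ → ℂ} {z : ℂ} (ha : DifferentiableAt ℝ a z) (h0 : a z ≠ 0) :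
    wdzbar (fun w => (a w)⁻¹) z = -(wdzbar a z) / (a z) ^ 2 := by
  have hg : DifferentiableAt ℝ (fun y : ℂ => y⁻¹) (a z) :=
    ((hasDerivAt_complex_inv h0).differentiableAt).restrictScalars ℝ
  have h1 := wdzbar_comp (g := fun y : ℂ => y⁻¹) hg ha
  rw [wdz_of_hasDerivAt (hasDerivAt_complex_inv h0),
    wdzbar_of_hasDerivAt (hasDerivAt_complex_inv h0)] at h1
  rw [h1]
  field_simp
  simp

theorem diff_exp_comp {a : ℂ → ℂ} {z : ℂ} (ha : DifferentiableAt ℝ a z) :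
    DifferentiableAt ℝ (fun w => Complex.exp (a w)) z :=
  (((Complex.hasDerivAt_exp (a z)).differentiableAt).restrictScalars ℝ).comp z ha

theorem wdzbar_exp_comp {a : ℂ → ℂ} {z : ℂ} (ha : DifferentiableAt ℝ a z) :
    wdzbar (fun w => Complex.exp (a w)) z = Complex.exp (a z) * wdzbar a z := by
  have hg : DifferentiableAt ℝ Complex.exp (a z) :=
    ((Complex.hasDerivAt_exp (a z)).differentiableAt).restrictScalars ℝ
  have h1 := wdzbar_comp (g := Complex.exp) hg ha
  rw [wdz_of_hasDerivAt (Complex.hasDerivAt_exp (a z)),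
    wdzbar_of_hasDerivAt (Complex.hasDerivAt_exp (a z))] at h1
  rw [h1]
  ring

theorem logNormSq_diff {w : ℂ} (hw : w ≠ 0) :
    DifferentiableAt ℝ (fun u : ℂ => Real.log (Complex.normSq u)) w := by
  have hns0 : Complex.normSq w ≠ 0 := by
    simpa [Complex.normSq_eq_zero] using hw
  have hre : HasFDerivAt (fun u : ℂ => u.re) Complex.reCLM w := Complex.reCLM.hasFDerivAt
  have him : HasFDerivAt (fun u : ℂ => u.im) Complex.imCLM w := Complex.imCLM.hasFDerivAt
  have h1 : HasFDerivAt (fun u : ℂ => Complex.normSq u)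
      (w.re • Complex.reCLM + w.re • Complex.reCLM
        + (w.im • Complex.imCLM + w.im • Complex.imCLM)) w := by
    have heq : (fun u : ℂ => Complex.normSq u) = fun u : ℂ => u.re * u.re + u.im * u.im :=
      funext fun u => Complex.normSq_apply u
    rw [heq]
    exact (hre.mul hre).add (him.mul him)
  exact (h1.log hns0).differentiableAt

theorem logNormSq_wdz {w : ℂ} (hw : w ≠ 0) :
    wdz (fun u : ℂ => ((Real.log (Complex.normSq u) : ℝ) : ℂ)) w = w⁻¹ := by
  have hns0 : Complex.normSq w ≠ 0 := by
    simpa [Complex.normSq_eq_zero] using hw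
  have hre : HasFDerivAt (fun u : ℂ => u.re) Complex.reCLM w := Complex.reCLM.hasFDerivAt
  have him : HasFDerivAt (fun u : ℂ => u.im) Complex.imCLM w := Complex.imCLM.hasFDerivAt
  have h1 : HasFDerivAt (fun u : ℂ => Complex.normSq u)
      (w.re • Complex.reCLM + w.re • Complex.reCLM
        + (w.im • Complex.imCLM + w.im • Complex.imCLM)) w := by
    have heq : (fun u : ℂ => Complex.normSq u) = fun u : ℂ => u.re * u.re + u.im * u.im :=
      funext fun u => Complex.normSq_apply u
    rw [heq]
    exact (hre.mul hre).add (him.mul him)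
  have h2 := h1.log hns0
  have h3 : HasFDerivAt (fun u : ℂ => ((Real.log (Complex.normSq u) : ℝ) : ℂ))
      (Complex.ofRealCLM.comp ((Complex.normSq w)⁻¹ •
        (w.re • Complex.reCLM + w.re • Complex.reCLM
          + (w.im • Complex.imCLM + w.im • Complex.imCLM)))) w :=
    Complex.ofRealCLM.hasFDerivAt.comp w h2
  rw [wdz, h3.fderiv]
  simp only [ContinuousLinearMap.coe_comp', Function.comp_apply,
    ContinuousLinearMap.coe_smul', Pi.smul_apply, ContinuousLinearMap.add_apply,
    ContinuousLinearMap.smul_apply, Complex.reCLM_apply, Complex.imCLM_apply,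
    Complex.ofRealCLM_apply, Complex.one_re, Complex.one_im, Complex.I_re, Complex.I_im,
    smul_eq_mul]
  rw [Complex.inv_def]
  rw [show (starRingEnd ℂ) w = (w.re : ℂ) - (w.im : ℂ) * Complex.I from by
    simp [Complex.ext_iff]]
  push_cast
  field_simp
  ring

theorem logNormSq_wdzbar {w : ℂ} (hw : w ≠ 0) :
    wdzbar (fun u : ℂ => ((Real.log (Complex.normSq u) : ℝ) : ℂ)) w
      = ((starRingEnd ℂ) w)⁻¹ := by
  rw [wdzbar_ofReal (logNormSq_diff hw), logNormSq_wdz hw, map_inv₀]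

def sigC (ρ : ℂ → ℝ) : ℂ → ℂ := fun u => (Real.log (ρ u) : ℂ)

def PhiF (ρ : ℂ → ℝ) (f : ℂ → ℂ) : ℂ → ℂ :=
  fun z => Complex.exp (sigC ρ (f z)) * (wdz f z * (starRingEnd ℂ) (wdzbar f z))

def VF (ρ : ℂ → ℝ) (f : ℂ → ℂ) : ℂ → ℂ :=
  fun z => wdz (sigC ρ) (f z) * wdz f z + wdz (wdz f) z * (wdz f z)⁻¹

def vR (ρ : ℂ → ℝ) (f : ℂ → ℂ) : ℂ → ℝ :=
  fun z => Real.log (ρ (f z)) + Real.log (Complex.normSq (wdz f z))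

theorem main_calc (Ω Ω' : Set ℂ) (hΩ : IsOpen Ω) (hΩ' : IsOpen Ω')
    (ρ : ℂ → ℝ) (hρpos : ∀ w ∈ Ω', 0 < ρ w) (hρ : ContDiffOn ℝ 2 ρ Ω')
    (hflat : IsHarmonicOn (fun w => Real.log (ρ w)) Ω')
    (f : ℂ → ℂ) (hf : ContDiffOn ℝ (⊤ : ℕ∞) f Ω) (hmaps : Set.MapsTo f Ω Ω')
    (hharm : IsRhoHarmonicOn f ρ Ω)
    (hfz : ∀ z ∈ Ω, wdz f z ≠ 0) (z : ℂ) (hz : z ∈ Ω) :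
    (DifferentiableAt ℝ (PhiF ρ f) z ∧ wdzbar (PhiF ρ f) z = 0) ∧
    (DifferentiableAt ℝ (VF ρ f) z ∧ wdzbar (VF ρ f) z = 0) ∧
    (DifferentiableAt ℝ (fun x => ((vR ρ f x : ℝ) : ℂ)) z ∧
      wdz (fun x => ((vR ρ f x : ℝ) : ℂ)) z = VF ρ f z) := by
  have hw : f z ∈ Ω' := hmaps hz
  have hFz := hfz z hz
  -- smoothness of f and its Wirtinger derivatives
  have hfTop : ContDiffAt ℝ (⊤ : ℕ∞) f z := hf.contDiffAt (hΩ.mem_nhds hz)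
  have hfc2 : ContDiffAt ℝ 2 f z := hfTop.of_le (by exact (WithTop.coe_le_coe.mpr (le_top : (2:ℕ∞) ≤ ⊤) : ((2:ℕ∞) : WithTop ℕ∞) ≤ _))
  have hfd : DifferentiableAt ℝ f z := hfTop.differentiableAt (by simp)
  have hFc2 : ContDiffAt ℝ 2 (wdz f) z := contDiffAt_wdz hfTop (WithTop.coe_le_coe.mpr le_top)
  have hFd : DifferentiableAt ℝ (wdz f) z := hFc2.differentiableAt two_ne_zero
  have hFbd : DifferentiableAt ℝ (wdzbar f) z :=
    (contDiffAt_wdzbar hfTop (WithTop.coe_le_coe.mpr le_top) : ContDiffAt ℝ 1 _ z).differentiableAt one_ne_zero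
  have hGd : DifferentiableAt ℝ (wdz (wdz f)) z :=
    (contDiffAt_wdz hFc2 le_rfl : ContDiffAt ℝ 1 _ z).differentiableAt one_ne_zero
  -- the metric factor
  have hσ2 : ContDiffAt ℝ 2 (fun u => Real.log (ρ u)) (f z) :=
    (hρ.contDiffAt (hΩ'.mem_nhds hw)).log (ne_of_gt (hρpos _ hw))
  have hσc2 : ContDiffAt ℝ 2 (sigC ρ) (f z) :=
    Complex.ofRealCLM.contDiff.contDiffAt.comp (f z) hσ2
  have hσd : DifferentiableAt ℝ (sigC ρ) (f z) := hσc2.differentiableAt two_ne_zero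
  have hσRd : DifferentiableAt ℝ (fun u => Real.log (ρ u)) (f z) :=
    hσ2.differentiableAt two_ne_zero
  have hσconj : wdzbar (sigC ρ) (f z) = (starRingEnd ℂ) (wdz (sigC ρ) (f z)) :=
    wdzbar_ofReal hσRd
  have hσwd : DifferentiableAt ℝ (wdz (sigC ρ)) (f z) :=
    (contDiffAt_wdz hσc2 le_rfl : ContDiffAt ℝ 1 _ _).differentiableAt one_ne_zero
  have hflat' : wdzbar (wdz (sigC ρ)) (f z) = 0 := harmonic_wdzbar_wdz hσ2 (hflat _ hw)
  -- composites
  have hσfd : DifferentiableAt ℝ (fun x => sigC ρ (f x)) z := hσd.comp z hfd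
  have hσf_wdz : wdz (fun x => sigC ρ (f x)) z
      = wdz (sigC ρ) (f z) * wdz f z
        + (starRingEnd ℂ) (wdz (sigC ρ) (f z)) * (starRingEnd ℂ) (wdzbar f z) := by
    rw [wdz_comp hσd hfd, hσconj]
  have hσf_wdzbar : wdzbar (fun x => sigC ρ (f x)) z
      = wdz (sigC ρ) (f z) * wdzbar f z
        + (starRingEnd ℂ) (wdz (sigC ρ) (f z)) * (starRingEnd ℂ) (wdz f z) := by
    rw [wdzbar_comp hσd hfd, hσconj]
  have hAd : DifferentiableAt ℝ (fun x => wdz (sigC ρ) (f x)) z := hσwd.comp z hfd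
  have hA_wdz : wdz (fun x => wdz (sigC ρ) (f x)) z
      = wdz (wdz (sigC ρ)) (f z) * wdz f z := by
    rw [wdz_comp hσwd hfd, hflat']
    ring
  have hA_wdzbar : wdzbar (fun x => wdz (sigC ρ) (f x)) z
      = wdz (wdz (sigC ρ)) (f z) * wdzbar f z := by
    rw [wdzbar_comp hσwd hfd, hflat']
    ring
  -- tension equation
  have htens : wdz (wdzbar f) z = -(wdz (sigC ρ) (f z) * wdz f z * wdzbar f z) := by
    have h := hharm z hz
    have h2 : wlog ρ (f z) = wdz (sigC ρ) (f z) := rfl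
    rw [h2] at h
    linear_combination h
  have hcommf : wdzbar (wdz f) z = wdz (wdzbar f) z := (wdz_wdzbar_comm hfc2).symm
  have hwdzbarF : wdzbar (wdz f) z = -(wdz (sigC ρ) (f z) * wdz f z * wdzbar f z) :=
    hcommf.trans htens
  have hTev : wdzbar (wdz f)
      =ᶠ[nhds z] (fun x => -(wdz (sigC ρ) (f x) * wdz f x * wdzbar f x)) := by
    filter_upwards [hΩ.mem_nhds hz] with x hx
    have hfT : ContDiffAt ℝ 2 f x := (hf.contDiffAt (hΩ.mem_nhds hx)).of_le (by exact (WithTop.coe_le_coe.mpr (le_top : (2:ℕ∞) ≤ ⊤) : ((2:ℕ∞) : WithTop ℕ∞) ≤ _))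
    have h1 : wdzbar (wdz f) x = wdz (wdzbar f) x := (wdz_wdzbar_comm hfT).symm
    rw [h1]
    have h := hharm x hx
    have h2 : wlog ρ (f x) = wdz (sigC ρ) (f x) := rfl
    rw [h2] at h
    linear_combination h
  -- conjugate factor
  have hCd : DifferentiableAt ℝ (fun x => (starRingEnd ℂ) (wdzbar f x)) z :=
    (Complex.conjCLE.hasFDerivAt.comp z hFbd.hasFDerivAt).differentiableAt
  -- (1) Phi
  have hΦd : DifferentiableAt ℝ (PhiF ρ f) z := by
    exact (diff_exp_comp hσfd).mul (hFd.mul hCd)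
  have hΦ : wdzbar (PhiF ρ f) z = 0 := by
    show wdzbar (fun x => Complex.exp (sigC ρ (f x))
      * (wdz f x * (starRingEnd ℂ) (wdzbar f x))) z = 0
    rw [wdzbar_mul (diff_exp_comp hσfd) (hFd.fun_mul hCd), wdzbar_mul hFd hCd,
      wdzbar_exp_comp hσfd, hσf_wdzbar, wdzbar_conj hFbd, hwdzbarF, htens]
    simp only [map_neg, map_mul]
    ring
  -- (2) V
  have hFinvd : DifferentiableAt ℝ (fun x => (wdz f x)⁻¹) z := diff_inv_comp hFd hFz
  have hVd : DifferentiableAt ℝ (VF ρ f) z := by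
    exact (hAd.mul hFd).add (hGd.mul hFinvd)
  have hwdzbarG : wdzbar (wdz (wdz f)) z
      = -(wdz (wdz (sigC ρ)) (f z) * wdz f z * wdz f z * wdzbar f z
          + wdz (sigC ρ) (f z) * wdz (wdz f) z * wdzbar f z
          - wdz (sigC ρ) (f z) * wdz (sigC ρ) (f z) * wdz f z * wdz f z * wdzbar f z) := by
    have h1 : wdzbar (wdz (wdz f)) z = wdz (wdzbar (wdz f)) z := (wdz_wdzbar_comm hFc2).symm
    rw [h1, wdz_congr hTev, show (fun x => -(wdz (sigC ρ) (f x) * wdz f x * wdzbar f x))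
        = (fun x => -((fun y => wdz (sigC ρ) (f y) * wdz f y) x * wdzbar f x)) from rfl,
      wdz_neg, wdz_mul (hAd.fun_mul hFd) hFbd, wdz_mul hAd hFd, hA_wdz, htens]
    ring
  have hV : wdzbar (VF ρ f) z = 0 := by
    show wdzbar (fun x => (fun y => wdz (sigC ρ) (f y) * wdz f y) x
      + (fun y => wdz (wdz f) y * (wdz f y)⁻¹) x) z = 0
    rw [wdzbar_add (hAd.fun_mul hFd) (hGd.fun_mul hFinvd), wdzbar_mul hAd hFd,
      wdzbar_mul hGd hFinvd, wdzbar_inv hFd hFz, hA_wdzbar, hwdzbarF, hwdzbarG]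
    field_simp
    ring
  -- (3) v
  have hL0 : DifferentiableAt ℝ (fun u : ℂ => ((Real.log (Complex.normSq u) : ℝ) : ℂ))
      (wdz f z) :=
    Complex.ofRealCLM.differentiableAt.comp _ (logNormSq_diff hFz)
  have hLd : DifferentiableAt ℝ
      (fun x => ((Real.log (Complex.normSq (wdz f x)) : ℝ) : ℂ)) z := hL0.comp z hFd
  have hvsplit : (fun x => ((vR ρ f x : ℝ) : ℂ))
      = fun x => (fun y => sigC ρ (f y)) x
        + (fun y => ((Real.log (Complex.normSq (wdz f y)) : ℝ) : ℂ)) x := by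
    funext x
    simp [vR, sigC, Complex.ofReal_add]
  have hvd : DifferentiableAt ℝ (fun x => ((vR ρ f x : ℝ) : ℂ)) z := by
    rw [hvsplit]
    exact hσfd.add hLd
  have hconjFz : (starRingEnd ℂ) (wdz f z) ≠ 0 := by
    simpa using hFz
  have hv : wdz (fun x => ((vR ρ f x : ℝ) : ℂ)) z = VF ρ f z := by
    rw [hvsplit, wdz_add hσfd hLd, hσf_wdz,
      wdz_comp hL0 hFd, logNormSq_wdz hFz, logNormSq_wdzbar hFz, hwdzbarF]
    show _ = wdz (sigC ρ) (f z) * wdz f z + wdz (wdz f) z * (wdz f z)⁻¹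
    simp only [map_neg, map_mul]
    field_simp
    ring
  exact ⟨⟨hΦd, hΦ⟩, ⟨hVd, hV⟩, ⟨hvd, hv⟩⟩

theorem wdz_sub {a b : ℂ → ℂ} {z : ℂ} (ha : DifferentiableAt ℝ a z)
    (hb : DifferentiableAt ℝ b z) :
    wdz (fun w => a w - b w) z = wdz a z - wdz b z := by
  simp only [wdz, fderiv_fun_sub ha hb, ContinuousLinearMap.sub_apply]
  ring

theorem diff_re_comp {P : ℂ → ℂ} {x : ℂ} (h : DifferentiableAt ℝ P x) :
    DifferentiableAt ℝ (fun y => (((P y).re : ℝ) : ℂ)) x :=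
  Complex.ofRealCLM.differentiableAt.comp x (Complex.reCLM.differentiableAt.comp x h)

theorem wdz_re_comp {P : ℂ → ℂ} {p x : ℂ} (h : HasDerivAt P p x) :
    wdz (fun y => (((P y).re : ℝ) : ℂ)) x = p / 2 := by
  have h1 : HasFDerivAt P (((1 : ℂ →L[ℂ] ℂ).smulRight p).restrictScalars ℝ) x :=
    h.hasFDerivAt.restrictScalars ℝ
  have h2 : HasFDerivAt (fun y => (((P y).re : ℝ) : ℂ))
      ((Complex.ofRealCLM.comp Complex.reCLM).comp
        (((1 : ℂ →L[ℂ] ℂ).smulRight p).restrictScalars ℝ)) x :=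
    (Complex.ofRealCLM.comp Complex.reCLM).hasFDerivAt.comp x h1
  rw [wdz, h2.fderiv]
  simp only [ContinuousLinearMap.coe_comp', Function.comp_apply,
    ContinuousLinearMap.coe_restrictScalars', ContinuousLinearMap.smulRight_apply,
    ContinuousLinearMap.one_apply, Complex.reCLM_apply, Complex.ofRealCLM_apply,
    smul_eq_mul, one_mul]
  rw [show ((Complex.I * p).re : ℂ) = ((Complex.I * p).re : ℝ) from rfl]
  simp only [Complex.mul_re, Complex.I_re, Complex.I_im]
  rw [show p = (p.re : ℂ) + (p.im : ℂ) * Complex.I from (Complex.re_add_im p).symm]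
  simp [Complex.ext_iff]
  ring_nf
  constructor <;> norm_num

theorem local_rep (Ω Ω' : Set ℂ) (hΩ : IsOpen Ω) (hΩ' : IsOpen Ω')
    (ρ : ℂ → ℝ) (hρpos : ∀ w ∈ Ω', 0 < ρ w) (hρ : ContDiffOn ℝ 2 ρ Ω')
    (hflat : IsHarmonicOn (fun w => Real.log (ρ w)) Ω')
    (f : ℂ → ℂ) (hf : ContDiffOn ℝ (⊤ : ℕ∞) f Ω) (hmaps : Set.MapsTo f Ω Ω')
    (hharm : IsRhoHarmonicOn f ρ Ω)
    (hfz : ∀ z ∈ Ω, wdz f z ≠ 0) (z₁ : ℂ) (hz₁ : z₁ ∈ Ω) :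
    ∃ r > 0, Metric.ball z₁ r ⊆ Ω ∧ ∃ (g : ℂ → ℂ) (k : ℝ), 0 < k ∧
      DifferentiableOn ℂ g (Metric.ball z₁ r) ∧
      ∀ z ∈ Metric.ball z₁ r,
        ‖g z‖ = k * ‖wdzbar f z / wdz f z‖ := by
  have hmc := main_calc Ω Ω' hΩ hΩ' ρ hρpos hρ hflat f hf hmaps hharm hfz
  obtain ⟨R, hR0, hRsub⟩ : ∃ R > 0, Metric.ball z₁ R ⊆ Ω := by
    rcases Metric.isOpen_iff.1 hΩ z₁ hz₁ with ⟨ε, hε, hsub⟩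
    exact ⟨ε, hε, hsub⟩
  set r := R / 2 with hr_def
  have hr0 : 0 < r := by positivity
  have hrR : r < R := by
    rw [hr_def]
    linarith
  have hrsub : Metric.ball z₁ r ⊆ Ω := fun x hx =>
    hRsub (Metric.ball_subset_ball hrR.le hx)
  -- primitive of 2 * VF on the ball
  have hVholo : DifferentiableOn ℂ (fun x => 2 * VF ρ f x)
      (Metric.ball z₁ (R.toNNReal : ℝ)) := by
    intro x hx
    rw [Real.coe_toNNReal R hR0.le] at hx
    have h := hmc x (hRsub hx)
    exact (((hasDerivAt_of_wdzbar_eq_zero h.2.1.1 h.2.1.2).differentiableAt).const_mul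
      2).differentiableWithinAt
  obtain ⟨P, hP⟩ : ∃ P : ℂ → ℂ, ∀ z ∈ Metric.ball z₁ r, HasDerivAt P (2 * VF ρ f z) z :=
    exists_primitive (Real.toNNReal_pos.2 hR0) hr0
      (by rw [Real.coe_toNNReal R hR0.le]; exact hrR) hVholo
  -- the holomorphic representative
  refine ⟨r, hr0, hrsub, fun x => PhiF ρ f x * Complex.exp (-(P x)),
    Real.exp (vR ρ f z₁ - (P z₁).re), Real.exp_pos _, ?_, ?_⟩
  · intro x hx
    have h := hmc x (hrsub hx)
    have h1 : DifferentiableAt ℂ (PhiF ρ f) x :=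
      (hasDerivAt_of_wdzbar_eq_zero h.1.1 h.1.2).differentiableAt
    have h2 : DifferentiableAt ℂ (fun y => Complex.exp (-(P y))) x :=
      (((hP x hx).neg).cexp).differentiableAt
    exact (h1.mul h2).differentiableWithinAt
  · -- the constancy of vR - Re P on the ball
    have hconst : ∀ x ∈ Metric.ball z₁ r, vR ρ f x - (P x).re = vR ρ f z₁ - (P z₁).re := by
      have hdiff : ∀ x ∈ Metric.ball z₁ r,
          DifferentiableAt ℝ (fun y => ((vR ρ f y : ℝ) : ℂ) - (((P y).re : ℝ) : ℂ)) x := by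
        intro x hx
        exact ((hmc x (hrsub hx)).2.2.1).sub
          (diff_re_comp ((hP x hx).differentiableAt.restrictScalars ℝ))
      have hbound : ∀ x ∈ Metric.ball z₁ r,
          ‖fderiv ℝ (fun y => ((vR ρ f y : ℝ) : ℂ) - (((P y).re : ℝ) : ℂ)) x‖ ≤ 0 := by
        intro x hx
        have h := hmc x (hrsub hx)
        have hwdz : wdz (fun y => ((vR ρ f y : ℝ) : ℂ) - (((P y).re : ℝ) : ℂ)) x = 0 := by
          rw [show (fun y => ((vR ρ f y : ℝ) : ℂ) - (((P y).re : ℝ) : ℂ))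
              = fun y => (fun t => ((vR ρ f t : ℝ) : ℂ)) y - (fun t => (((P t).re : ℝ) : ℂ)) y
              from rfl, wdz_sub h.2.2.1 (diff_re_comp ((hP x hx).differentiableAt.restrictScalars ℝ)),
            h.2.2.2, wdz_re_comp (hP x hx)]
          ring
        have hwdzbar : wdzbar (fun y => ((vR ρ f y : ℝ) : ℂ) - (((P y).re : ℝ) : ℂ)) x = 0 := by
          have hreal : (fun y => ((vR ρ f y : ℝ) : ℂ) - (((P y).re : ℝ) : ℂ))
              = fun y => (((vR ρ f y - (P y).re : ℝ) : ℝ) : ℂ) := by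
            funext y
            push_cast
            ring
          have hrd : DifferentiableAt ℝ (fun y => vR ρ f y - (P y).re) x := by
            have := (Complex.reCLM.differentiableAt.comp x (hdiff x hx))
            have heq : (fun y => vR ρ f y - (P y).re)
                = fun y => (((vR ρ f y : ℝ) : ℂ) - (((P y).re : ℝ) : ℂ)).re := by
              funext y
              simp
            rw [heq]
            exact this
          rw [hreal, wdzbar_ofReal hrd, ← hreal, hwdz]
          simp
        have hfd0 : fderiv ℝ (fun y => ((vR ρ f y : ℝ) : ℂ) - (((P y).re : ℝ) : ℂ)) x = 0 := by
          apply ContinuousLinearMap.ext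
          intro u
          rw [wirtinger_apply _ x u, hwdz, hwdzbar]
          simp
        rw [hfd0]
        simp
      intro x hx
      have hle := Convex.norm_image_sub_le_of_norm_fderiv_le hdiff hbound (convex_ball z₁ r)
        (Metric.mem_ball_self hr0) hx
      have h0 : (((vR ρ f x : ℝ) : ℂ) - (((P x).re : ℝ) : ℂ))
          - (((vR ρ f z₁ : ℝ) : ℂ) - (((P z₁).re : ℝ) : ℂ)) = 0 := by
        rw [← norm_le_zero_iff]
        simpa using hle
      have h1 := congrArg Complex.re h0
      simp only [Complex.sub_re, Complex.ofReal_re, Complex.zero_re] at h1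
      linarith
    -- the modulus identity
    intro x hx
    have hxΩ : x ∈ Ω := hrsub hx
    have hρx : 0 < ρ (f x) := hρpos _ (hmaps hxΩ)
    have hFx : wdz f x ≠ 0 := hfz x hxΩ
    have hFxa : ‖wdz f x‖ ≠ 0 := by
      simpa using hFx
    have hnsq : 0 < Complex.normSq (wdz f x) := Complex.normSq_pos.2 hFx
    have habsPhi : ‖PhiF ρ f x‖
        = ρ (f x) * (‖wdz f x‖ * ‖wdzbar f x‖) := by
      rw [show PhiF ρ f x = Complex.exp (sigC ρ (f x))
        * (wdz f x * (starRingEnd ℂ) (wdzbar f x)) from rfl]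
      rw [norm_mul, norm_mul, Complex.norm_exp, Complex.norm_conj]
      congr 1
      rw [show (sigC ρ (f x)).re = Real.log (ρ (f x)) from by simp [sigC]]
      exact Real.exp_log hρx
    have hPre : (P x).re = vR ρ f x - (vR ρ f z₁ - (P z₁).re) := by
      have := hconst x hx
      linarith
    have hexpv : Real.exp (vR ρ f x) = ρ (f x) * Complex.normSq (wdz f x) := by
      rw [show vR ρ f x = Real.log (ρ (f x)) + Real.log (Complex.normSq (wdz f x)) from rfl,
        Real.exp_add, Real.exp_log hρx, Real.exp_log hnsq]
    rw [norm_mul, habsPhi, Complex.norm_exp, Complex.neg_re, hPre, norm_div]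
    rw [show -(vR ρ f x - (vR ρ f z₁ - (P z₁).re))
      = (vR ρ f z₁ - (P z₁).re) + -(vR ρ f x) from by ring, Real.exp_add, Real.exp_neg, hexpv]
    rw [Complex.normSq_eq_norm_sq]
    field_simp

theorem global_const (Ω Ω' : Set ℂ) (hΩ : IsOpen Ω) (hconn : IsConnected Ω) (hΩ' : IsOpen Ω')
    (ρ : ℂ → ℝ) (hρpos : ∀ w ∈ Ω', 0 < ρ w) (hρ : ContDiffOn ℝ 2 ρ Ω')
    (hflat : IsHarmonicOn (fun w => Real.log (ρ w)) Ω')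
    (f : ℂ → ℂ) (hf : ContDiffOn ℝ (⊤ : ℕ∞) f Ω) (hmaps : Set.MapsTo f Ω Ω')
    (hharm : IsRhoHarmonicOn f ρ Ω)
    (hfz : ∀ z ∈ Ω, wdz f z ≠ 0) {z₀ : ℂ} (hz₀ : z₀ ∈ Ω) {c : ℝ}
    (hev : ∀ᶠ w in nhds z₀, ‖wdzbar f w / wdz f w‖ = c) :
    ∀ z ∈ Ω, ‖wdzbar f z / wdz f z‖ = c := by
  set m : ℂ → ℝ := fun w => ‖wdzbar f w / wdz f w‖ with hm
  set U : Set ℂ := {x | x ∈ Ω ∧ ∀ᶠ w in nhds x, m w = c} with hU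
  have hUopen : IsOpen U := by
    rw [isOpen_iff_mem_nhds]
    rintro x ⟨hxΩ, hxev⟩
    rcases mem_nhds_iff.1 hxev with ⟨O, hOsub, hOopen, hxO⟩
    refine Filter.mem_of_superset ((hOopen.inter hΩ).mem_nhds ⟨hxO, hxΩ⟩) ?_
    rintro y ⟨hyO, hyΩ⟩
    exact ⟨hyΩ, Filter.mem_of_superset (hOopen.mem_nhds hyO) hOsub⟩
  have hUcl : Ω ∩ closure U ⊆ U := by
    rintro x ⟨hxΩ, hxcl⟩
    obtain ⟨r, hr0, hrsub, g, k, hk, hg, habs⟩ :=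
      local_rep Ω Ω' hΩ hΩ' ρ hρpos hρ hflat f hf hmaps hharm hfz x hxΩ
    obtain ⟨a, hab, haU⟩ : ∃ a, a ∈ Metric.ball x r ∧ a ∈ U := by
      rcases mem_closure_iff.1 hxcl (Metric.ball x r) Metric.isOpen_ball
        (Metric.mem_ball_self hr0) with ⟨a, ha1, ha2⟩
      exact ⟨a, ha1, ha2⟩
    have hball_a : Metric.ball x r ∈ nhds a := Metric.isOpen_ball.mem_nhds hab
    have hga : ∀ᶠ w in nhds a, ‖g w‖ = k * c := by
      filter_upwards [haU.2, hball_a] with w h1 h2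
      rw [habs w h2, show ‖wdzbar f w / wdz f w‖ = m w from rfl, h1]
    have hganorm : ‖g a‖ = k * c := hga.self_of_nhds
    have hd : ∀ᶠ w in nhds a, DifferentiableAt ℂ g w := by
      filter_upwards [hball_a] with w hw
      exact hg.differentiableAt (Metric.isOpen_ball.mem_nhds hw)
    have hmax : IsLocalMax (norm ∘ g) a := by
      filter_upwards [hga] with w hw
      simp only [Function.comp_apply]
      rw [hw, hganorm]
    have heq := Complex.eventually_eq_of_isLocalMax_norm hd hmax
    have hEqOn : Set.EqOn g (fun _ => g a) (Metric.ball x r) := by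
      refine AnalyticOnNhd.eqOn_of_preconnected_of_eventuallyEq
        (hg.analyticOnNhd Metric.isOpen_ball) analyticOnNhd_const
        (convex_ball x r).isPreconnected hab heq
    have hmball : ∀ y ∈ Metric.ball x r, m y = c := by
      intro y hy
      show m y = c
      have h1 : ‖g y‖ = k * m y := habs y hy
      have h2 : g y = g a := hEqOn hy
      rw [h2, hganorm] at h1
      have hk' : k ≠ 0 := ne_of_gt hk
      field_simp at h1
      exact h1.symm
    exact ⟨hxΩ, Filter.mem_of_superset (Metric.isOpen_ball.mem_nhds (Metric.mem_ball_self hr0))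
      hmball⟩
  have hz₀U : z₀ ∈ U := ⟨hz₀, hev⟩
  have hΩU : Ω ⊆ U := by
    have hVopen : IsOpen (Ω ∩ (closure U)ᶜ) := hΩ.inter isClosed_closure.isOpen_compl
    have hdisj : Disjoint U (Ω ∩ (closure U)ᶜ) := by
      refine Set.disjoint_left.2 ?_
      rintro y hyU ⟨_, hyc⟩
      exact hyc (subset_closure hyU)
    have hcover : Ω ⊆ U ∪ Ω ∩ (closure U)ᶜ := by
      intro y hy
      by_cases hyc : y ∈ closure U
      · exact Or.inl (hUcl ⟨hy, hyc⟩)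
      · exact Or.inr ⟨hy, hyc⟩
    exact hconn.isPreconnected.subset_left_of_subset_union hUopen hVopen hdisj hcover
      ⟨z₀, hz₀, hz₀U⟩
  intro z hz
  exact ((hΩU hz).2).self_of_nhds

/-- strong maximum principle for `|μ_f|`: a local maximum (or a local minimum
with nonzero value) forces `|μ_f|` to be constant; in particular there is no strict local
maximum, and no strict local minimum with nonzero value. -/
theorem beltrami_maximum_principle
    (Ω Ω' : Set ℂ) (hΩ : IsOpen Ω) (hconn : IsConnected Ω) (hΩ' : IsOpen Ω')
    (ρ : ℂ → ℝ) (hρpos : ∀ w ∈ Ω', 0 < ρ w) (hρ : ContDiffOn ℝ 2 ρ Ω')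
    (hflat : IsHarmonicOn (fun w => Real.log (ρ w)) Ω')
    (f : ℂ → ℂ) (hf : ContDiffOn ℝ (⊤ : ℕ∞) f Ω) (hmaps : Set.MapsTo f Ω Ω')
    (hharm : IsRhoHarmonicOn f ρ Ω)
    (hfz : ∀ z ∈ Ω, wdz f z ≠ 0) :
    (∀ z₀ ∈ Ω, IsLocalMax (fun z => ‖wdzbar f z / wdz f z‖) z₀ →
      ∀ z ∈ Ω, ‖wdzbar f z / wdz f z‖ = ‖wdzbar f z₀ / wdz f z₀‖) ∧
    (∀ z₀ ∈ Ω, IsLocalMin (fun z => ‖wdzbar f z / wdz f z‖) z₀ →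
      wdzbar f z₀ / wdz f z₀ ≠ 0 →
      ∀ z ∈ Ω, ‖wdzbar f z / wdz f z‖ = ‖wdzbar f z₀ / wdz f z₀‖) ∧
    (¬ ∃ z₀ ∈ Ω, ∀ᶠ z in 𝓝[≠] z₀,
      ‖wdzbar f z / wdz f z‖ < ‖wdzbar f z₀ / wdz f z₀‖) ∧
    (¬ ∃ z₀ ∈ Ω, wdzbar f z₀ / wdz f z₀ ≠ 0 ∧ ∀ᶠ z in 𝓝[≠] z₀,
      ‖wdzbar f z₀ / wdz f z₀‖ < ‖wdzbar f z / wdz f z‖) := by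
  have part1 : ∀ z₀ ∈ Ω, IsLocalMax (fun z => ‖wdzbar f z / wdz f z‖) z₀ →
      ∀ z ∈ Ω, ‖wdzbar f z / wdz f z‖ = ‖wdzbar f z₀ / wdz f z₀‖ := by
    intro z₀ hz₀ hmax
    obtain ⟨r, hr0, hrsub, g, k, hk, hg, habs⟩ :=
      local_rep Ω Ω' hΩ hΩ' ρ hρpos hρ hflat f hf hmaps hharm hfz z₀ hz₀
    have hball : Metric.ball z₀ r ∈ nhds z₀ := Metric.isOpen_ball.mem_nhds
      (Metric.mem_ball_self hr0)
    have hd : ∀ᶠ w in nhds z₀, DifferentiableAt ℂ g w := by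
      filter_upwards [hball] with w hw
      exact hg.differentiableAt (Metric.isOpen_ball.mem_nhds hw)
    have hgmax : IsLocalMax (norm ∘ g) z₀ := by
      filter_upwards [hmax, hball] with w hw hwb
      simp only [Function.comp_apply]
      rw [habs w hwb, habs z₀ (Metric.mem_ball_self hr0)]
      exact mul_le_mul_of_nonneg_left hw hk.le
    have hgev := Complex.norm_eventually_eq_of_isLocalMax hd hgmax
    have hev : ∀ᶠ w in nhds z₀,
        ‖wdzbar f w / wdz f w‖ = ‖wdzbar f z₀ / wdz f z₀‖ := by
      filter_upwards [hgev, hball] with w h1 h2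
      have e1 := habs w h2
      have e0 := habs z₀ (Metric.mem_ball_self hr0)
      rw [e1, e0] at h1
      exact mul_left_cancel₀ (ne_of_gt hk) h1
    exact global_const Ω Ω' hΩ hconn hΩ' ρ hρpos hρ hflat f hf hmaps hharm hfz hz₀ hev
  have part2 : ∀ z₀ ∈ Ω, IsLocalMin (fun z => ‖wdzbar f z / wdz f z‖) z₀ →
      wdzbar f z₀ / wdz f z₀ ≠ 0 →
      ∀ z ∈ Ω, ‖wdzbar f z / wdz f z‖ = ‖wdzbar f z₀ / wdz f z₀‖ := by
    intro z₀ hz₀ hmin hne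
    obtain ⟨r, hr0, hrsub, g, k, hk, hg, habs⟩ :=
      local_rep Ω Ω' hΩ hΩ' ρ hρpos hρ hflat f hf hmaps hharm hfz z₀ hz₀
    have hball : Metric.ball z₀ r ∈ nhds z₀ := Metric.isOpen_ball.mem_nhds
      (Metric.mem_ball_self hr0)
    have hm0pos : 0 < ‖wdzbar f z₀ / wdz f z₀‖ := norm_pos_iff.mpr hne
    have hgz₀ : g z₀ ≠ 0 := by
      intro h
      have := habs z₀ (Metric.mem_ball_self hr0)
      rw [h] at this
      simp only [norm_zero] at this
      nlinarith
    have hgcont : ContinuousAt g z₀ :=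
      (hg.differentiableAt hball).continuousAt
    have hgne : ∀ᶠ w in nhds z₀, g w ≠ 0 := hgcont.eventually_ne hgz₀
    have hd : ∀ᶠ w in nhds z₀, DifferentiableAt ℂ (fun y => (g y)⁻¹) w := by
      filter_upwards [hball, hgne] with w hwb hwne
      exact (hg.differentiableAt (Metric.isOpen_ball.mem_nhds hwb)).inv hwne
    have hinvmax : IsLocalMax (norm ∘ fun y => (g y)⁻¹) z₀ := by
      filter_upwards [hmin, hball] with w hw hwb
      simp only [Function.comp_apply, norm_inv]
      rw [habs w hwb, habs z₀ (Metric.mem_ball_self hr0)]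
      have h1 : 0 < k * ‖wdzbar f z₀ / wdz f z₀‖ := by positivity
      exact inv_anti₀ h1 (mul_le_mul_of_nonneg_left hw hk.le)
    have hgev := Complex.norm_eventually_eq_of_isLocalMax hd hinvmax
    have hev : ∀ᶠ w in nhds z₀,
        ‖wdzbar f w / wdz f w‖ = ‖wdzbar f z₀ / wdz f z₀‖ := by
      filter_upwards [hgev, hball, hgne] with w h1 h2 h3
      simp only [norm_inv] at h1
      have hgw : ‖g w‖ ≠ 0 := by simpa using h3
      have hgz : ‖g z₀‖ ≠ 0 := by simpa using hgz₀
      have h4 : ‖g w‖ = ‖g z₀‖ := by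
        have := inv_injective h1
        exact this
      rw [habs w h2, habs z₀ (Metric.mem_ball_self hr0)] at h4
      exact mul_left_cancel₀ (ne_of_gt hk) h4
    exact global_const Ω Ω' hΩ hconn hΩ' ρ hρpos hρ hflat f hf hmaps hharm hfz hz₀ hev
  refine ⟨part1, part2, ?_, ?_⟩
  · rintro ⟨z₀, hz₀, hstrict⟩
    have hmax : IsLocalMax (fun z => ‖wdzbar f z / wdz f z‖) z₀ := by
      unfold IsLocalMax IsMaxFilter
      rw [← nhdsNE_sup_pure z₀, Filter.eventually_sup]
      exact ⟨hstrict.mono fun z hz => hz.le, by simp⟩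
    have hconst := part1 z₀ hz₀ hmax
    have hΩev : ∀ᶠ z in nhdsWithin z₀ {z₀}ᶜ, z ∈ Ω :=
      Filter.Eventually.filter_mono nhdsWithin_le_nhds
        (Filter.eventually_iff_exists_mem.2 ⟨Ω, hΩ.mem_nhds hz₀, fun y hy => hy⟩)
    haveI : (nhdsWithin z₀ {z₀}ᶜ).NeBot := Module.punctured_nhds_neBot ℝ ℂ z₀
    obtain ⟨z, hzlt, hzΩ⟩ := (hstrict.and hΩev).exists
    have := hconst z hzΩ
    rw [this] at hzlt
    exact lt_irrefl _ hzlt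
  · rintro ⟨z₀, hz₀, hne, hstrict⟩
    have hmin : IsLocalMin (fun z => ‖wdzbar f z / wdz f z‖) z₀ := by
      unfold IsLocalMin IsMinFilter
      rw [← nhdsNE_sup_pure z₀, Filter.eventually_sup]
      exact ⟨hstrict.mono fun z hz => hz.le, by simp⟩
    have hconst := part2 z₀ hz₀ hmin hne
    have hΩev : ∀ᶠ z in nhdsWithin z₀ {z₀}ᶜ, z ∈ Ω :=
      Filter.Eventually.filter_mono nhdsWithin_le_nhds
        (Filter.eventually_iff_exists_mem.2 ⟨Ω, hΩ.mem_nhds hz₀, fun y hy => hy⟩)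
    haveI : (nhdsWithin z₀ {z₀}ᶜ).NeBot := Module.punctured_nhds_neBot ℝ ℂ z₀
    obtain ⟨z, hzlt, hzΩ⟩ := (hstrict.and hΩev).exists
    have := hconst z hzΩ
    rw [this] at hzlt
    exact lt_irrefl _ hzlt
end
end

section
/- Let v : ℂ → ℝ be a smooth function, let α, β ∈ ℂ with |α| < 1 and |β| < 1, and let F, G : ℂ → ℂ be smooth orientation-preserving diffeomorphisms of ℂ whose inverses have Beltrami coefficients μ_{F⁻¹}(w) = α·e^{−i·v(w)} and μ_{G⁻¹}(w) = β·e^{−i·v(w)} for all w ∈ ℂ. Then the Beltrami coefficient of the composition F⁻¹∘G has constant modulus: for every z ∈ ℂ, |μ_{F⁻¹∘G}(z)| = |α − β|/|1 − conj(α)·β|; consequently the distortion K(z, F⁻¹∘G) = (1 + t)/(1 − t) is constant in z, where t = |α − β|/|1 − conj(α)·β|. -/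
noncomputable section

open Complex Set Topology

lemma clm_decomp (L : ℂ →L[ℝ] ℂ) (u : ℂ) :
    L u = (1 / 2 : ℂ) * (L 1 - Complex.I * L Complex.I) * u
        + (1 / 2 : ℂ) * (L 1 + Complex.I * L Complex.I) * (starRingEnd ℂ) u := by
  have h : u = u.re • (1 : ℂ) + u.im • Complex.I := by
    simp [Complex.real_smul, Complex.re_add_im]
  have h2 : (starRingEnd ℂ) u = (u.re : ℂ) - u.im * Complex.I := by
    simp [Complex.ext_iff]
  rw [h2]
  nth_rewrite 1 [h]
  rw [map_add, map_smul, map_smul, Complex.real_smul, Complex.real_smul]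
  have hu : u = (u.re : ℂ) + u.im * Complex.I := (Complex.re_add_im u).symm
  nth_rewrite 3 [hu]
  linear_combination (u.im : ℂ) * (L Complex.I) * Complex.I_sq

lemma fderiv_comp_apply' (f g : ℂ → ℂ) (hf : Differentiable ℝ f) (hg : Differentiable ℝ g)
    (z u : ℂ) : fderiv ℝ (f ∘ g) z u = fderiv ℝ f (g z) (fderiv ℝ g z u) := by
  rw [fderiv_comp z (hf _) (hg _)]; rfl

lemma wdz_comp_s13 (f g : ℂ → ℂ) (hf : Differentiable ℝ f) (hg : Differentiable ℝ g) (z : ℂ) :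
    wdz (f ∘ g) z = wdz f (g z) * wdz g z + wdzbar f (g z) * (starRingEnd ℂ) (wdzbar g z) := by
  unfold wdz wdzbar
  rw [fderiv_comp_apply' f g hf hg, fderiv_comp_apply' f g hf hg,
    clm_decomp (fderiv ℝ f (g z)) (fderiv ℝ g z 1),
    clm_decomp (fderiv ℝ f (g z)) (fderiv ℝ g z Complex.I)]
  simp only [map_mul, map_add, map_ofNat, map_one, Complex.conj_I, map_div₀]
  ring

lemma wdzbar_comp_s13 (f g : ℂ → ℂ) (hf : Differentiable ℝ f) (hg : Differentiable ℝ g) (z : ℂ) :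
    wdzbar (f ∘ g) z = wdz f (g z) * wdzbar g z + wdzbar f (g z) * (starRingEnd ℂ) (wdz g z) := by
  unfold wdz wdzbar
  rw [fderiv_comp_apply' f g hf hg, fderiv_comp_apply' f g hf hg,
    clm_decomp (fderiv ℝ f (g z)) (fderiv ℝ g z 1),
    clm_decomp (fderiv ℝ f (g z)) (fderiv ℝ g z Complex.I)]
  simp only [map_mul, map_add, map_sub, map_ofNat, map_one, Complex.conj_I, map_div₀]
  ring

lemma wdz_id' (z : ℂ) : wdz id z = 1 := by
  unfold wdz; rw [fderiv_id]; simp; norm_num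

lemma wdzbar_id' (z : ℂ) : wdzbar id z = 0 := by
  unfold wdzbar; rw [fderiv_id]; simp

theorem composition_constant_distortion
    (v : ℂ → ℝ) (hv : ContDiff ℝ (⊤ : ℕ∞) v)
    (α β : ℂ) (hα : ‖α‖ < 1) (hβ : ‖β‖ < 1)
    (F G Finv Ginv : ℂ → ℂ)
    (hF : ContDiff ℝ (⊤ : ℕ∞) F) (hG : ContDiff ℝ (⊤ : ℕ∞) G)
    (hFinv : ContDiff ℝ (⊤ : ℕ∞) Finv) (hGinv : ContDiff ℝ (⊤ : ℕ∞) Ginv)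
    (hF1 : ∀ z, Finv (F z) = z) (hF2 : ∀ w, F (Finv w) = w)
    (hG1 : ∀ z, Ginv (G z) = z) (hG2 : ∀ w, G (Ginv w) = w)
    (hFOP : ∀ z, ‖wdzbar F z‖ < ‖wdz F z‖)
    (hGOP : ∀ z, ‖wdzbar G z‖ < ‖wdz G z‖)
    (hμF : ∀ w, wdzbar Finv w / wdz Finv w = α * Complex.exp (-Complex.I * v w))
    (hμG : ∀ w, wdzbar Ginv w / wdz Ginv w = β * Complex.exp (-Complex.I * v w)) :
    ∀ z, ‖wdzbar (Finv ∘ G) z / wdz (Finv ∘ G) z‖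
          = ‖α - β‖ / ‖1 - (starRingEnd ℂ) α * β‖ ∧
        (1 + ‖wdzbar (Finv ∘ G) z / wdz (Finv ∘ G) z‖) /
            (1 - ‖wdzbar (Finv ∘ G) z / wdz (Finv ∘ G) z‖)
          = (1 + ‖α - β‖ / ‖1 - (starRingEnd ℂ) α * β‖) /
            (1 - ‖α - β‖ / ‖1 - (starRingEnd ℂ) α * β‖) := by
  have hFd := hF.differentiable (by simp)
  have hGd := hG.differentiable (by simp)
  have hFid := hFinv.differentiable (by simp)
  have hGid := hGinv.differentiable (by simp)
  intro z
  set w := G z with hw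
  set e := Complex.exp (-Complex.I * v w) with he
  -- conj e * e = 1
  have econj : (starRingEnd ℂ) e * e = 1 := by
    rw [he, ← Complex.exp_conj, ← Complex.exp_add]
    simp
  -- nonvanishing of wdz G and wdz F
  have hGz : wdz G z ≠ 0 := by
    intro h0
    exact absurd (hGOP z) (by rw [h0]; simp [norm_nonneg])
  -- identities from Ginv ∘ G = id
  have hGG : Ginv ∘ G = id := funext hG1
  have hid1 : wdz Ginv w * wdz G z + wdzbar Ginv w * (starRingEnd ℂ) (wdzbar G z) = 1 := by
    rw [← wdz_comp_s13 Ginv G hGid hGd z, hGG, wdz_id']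
  have hid2 : wdz Ginv w * wdzbar G z + wdzbar Ginv w * (starRingEnd ℂ) (wdz G z) = 0 := by
    rw [← wdzbar_comp_s13 Ginv G hGid hGd z, hGG, wdzbar_id']
  have hq : wdz Ginv w ≠ 0 := by
    intro h0
    rw [h0, zero_mul, zero_add, mul_eq_zero] at hid2
    rcases hid2 with h | h
    · rw [h0, h] at hid1; simp at hid1
    · exact hGz (by simpa using h)
  -- identities from Finv ∘ F = id at the point Finv w
  have hFz : wdz F (Finv w) ≠ 0 := by
    intro h0
    exact absurd (hFOP (Finv w)) (by rw [h0]; simp [norm_nonneg])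
  have hFF : Finv ∘ F = id := funext hF1
  have hfid1 : wdz Finv w * wdz F (Finv w)
      + wdzbar Finv w * (starRingEnd ℂ) (wdzbar F (Finv w)) = 1 := by
    have h := wdz_comp_s13 Finv F hFid hFd (Finv w)
    rw [hFF, wdz_id', hF2 w] at h
    exact h.symm
  have hfid2 : wdz Finv w * wdzbar F (Finv w)
      + wdzbar Finv w * (starRingEnd ℂ) (wdz F (Finv w)) = 0 := by
    have h := wdzbar_comp_s13 Finv F hFid hFd (Finv w)
    rw [hFF, wdzbar_id', hF2 w] at h
    exact h.symm
  have ha : wdz Finv w ≠ 0 := by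
    intro h0
    rw [h0, zero_mul, zero_add, mul_eq_zero] at hfid2
    rcases hfid2 with h | h
    · rw [h0, h] at hfid1; simp at hfid1
    · exact hFz (by simpa using h)
  -- Beltrami relations
  have hbF : wdzbar Finv w = α * e * wdz Finv w := by
    have h := hμF w
    rw [div_eq_iff ha] at h
    rw [h]
  have hbG : wdzbar Ginv w = β * e * wdz Ginv w := by
    have h := hμG w
    rw [div_eq_iff hq] at h
    rw [h]
  -- wdzbar G z = -β e conj(wdz G z)
  have hGbar : wdzbar G z = -(β * e) * (starRingEnd ℂ) (wdz G z) := by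
    rw [hbG] at hid2
    have h : wdz Ginv w * (wdzbar G z + β * e * (starRingEnd ℂ) (wdz G z)) = 0 := by
      linear_combination hid2
    rcases mul_eq_zero.mp h with h' | h'
    · exact absurd h' hq
    · linear_combination h'
  -- chain rule for Finv ∘ G
  have h1 : wdz (Finv ∘ G) z = wdz Finv w * wdz G z * (1 - α * (starRingEnd ℂ) β) := by
    rw [wdz_comp_s13 Finv G hFid hGd z, ← hw, hbF, hGbar]
    simp only [map_mul, map_neg, Complex.conj_conj]
    linear_combination (-(α * (starRingEnd ℂ) β * wdz Finv w * wdz G z)) * econj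
  have h2 : wdzbar (Finv ∘ G) z
      = wdz Finv w * e * (α - β) * (starRingEnd ℂ) (wdz G z) := by
    rw [wdzbar_comp_s13 Finv G hFid hGd z, ← hw, hbF, hGbar]
    ring
  -- the modulus computation
  have habs_e : ‖e‖ = 1 := by
    rw [he, Complex.norm_exp]
    simp
  have habs_denom : ‖1 - α * (starRingEnd ℂ) β‖
      = ‖1 - (starRingEnd ℂ) α * β‖ := by
    rw [← Complex.norm_conj (1 - (starRingEnd ℂ) α * β)]
    congr 1
    simp only [map_sub, map_mul, map_one, Complex.conj_conj]
  have key : ‖wdzbar (Finv ∘ G) z / wdz (Finv ∘ G) z‖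
      = ‖α - β‖ / ‖1 - (starRingEnd ℂ) α * β‖ := by
    rw [norm_div, h1, h2]
    simp only [norm_mul, Complex.norm_conj, habs_e, ← habs_denom]
    have h1' : ‖wdz Finv w‖ ≠ 0 := by simpa using ha
    have h2' : ‖wdz G z‖ ≠ 0 := by simpa using hGz
    have h3' : ‖1 - α * (starRingEnd ℂ) β‖ ≠ 0 := by
      intro h0
      have h5 : (1 : ℂ) = α * (starRingEnd ℂ) β := sub_eq_zero.mp (by simpa using h0)
      have h6 : ‖α * (starRingEnd ℂ) β‖ < 1 := by
        rw [norm_mul, Complex.norm_conj]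
        nlinarith [norm_nonneg α, norm_nonneg β]
      rw [← h5] at h6
      simp at h6
    field_simp
  exact ⟨key, by rw [key]⟩
end
end
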